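/- arXiv:2306.08622 — 5 statements merged into one kernel-verified Lean document; each statement's English description precedes it below -/
import Mathlib

section
/- If a forward label l₁ = (i, c₁, S₁, R₁) dominates l₂ = (i, c₂, S₂, R₂) — meaning c₁ ≤ c₂, S₁ ⊆ S₂, and R₁ ≤ R₂ componentwise — then for every feasible extension of l₂ along an arc (i,j), the corresponding extension of l₁ along (i,j) is also feasible, and the extended label of l₁ dominates the extended label of l₂. -/
theorem stmt1_general {V : Type} [DecidableEq V] {k : ℕ}
    (carc : V → V → ℝ) (r : V → V → Fin k → ℝ) (U : Fin k → ℝ)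
    (i j : V) (c₁ c₂ : ℝ) (S₁ S₂ : Finset V) (R₁ R₂ : Fin k → ℝ)
    -- l₁ dominates l₂ :
    (hc : c₁ ≤ c₂) (hS : S₁ ⊆ S₂) (hR : ∀ t, R₁ t ≤ R₂ t)
    -- extension of l₂ along (i,j) is feasible :
    (hj₂ : j ∉ S₂) (hU₂ : ∀ t, R₂ t + r i j t ≤ U t) :
    -- extension of l₁ along (i,j) is feasible
    (j ∉ S₁ ∧ ∀ t, R₁ t + r i j t ≤ U t) ∧
    -- and the extended label of l₁ dominates the extended label of l₂
    (c₁ + carc i j ≤ c₂ + carc i j ∧ insert j S₁ ⊆ insert j S₂ ∧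
      ∀ t, R₁ t + r i j t ≤ R₂ t + r i j t) := by
  have hR' : ∀ t, R₁ t + r i j t ≤ R₂ t + r i j t := fun t => by gcongr; exact hR t
  exact ⟨⟨fun hj₁ => hj₂ (hS hj₁), fun t => (hR' t).trans (hU₂ t)⟩,
    by gcongr, Finset.insert_subset_insert j hS, hR'⟩

/-- Dominance between forward labels `(i, c, S, R)` at the same node, with fixed
arc costs `carc`, nonnegative arc resource consumptions `r`, and resource upper
bounds `U`: if `l₁` dominates `l₂` then any feasible extension of `l₂` along an
arc `(i,j)` yields a feasible extension of `l₁`, and the extended label of `l₁`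
dominates the extended label of `l₂`. -/
theorem stmt1 {V : Type} [DecidableEq V] {k : ℕ}
    (carc : V → V → ℝ) (r : V → V → Fin k → ℝ) (U : Fin k → ℝ)
    (hr : ∀ i j t, 0 ≤ r i j t)
    (i j : V) (c₁ c₂ : ℝ) (S₁ S₂ : Finset V) (R₁ R₂ : Fin k → ℝ)
    -- l₁ dominates l₂ :
    (hc : c₁ ≤ c₂) (hS : S₁ ⊆ S₂) (hR : ∀ t, R₁ t ≤ R₂ t)
    -- extension of l₂ along (i,j) is feasible :
    (hj₂ : j ∉ S₂) (hU₂ : ∀ t, R₂ t + r i j t ≤ U t) :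
    -- extension of l₁ along (i,j) is feasible
    (j ∉ S₁ ∧ ∀ t, R₁ t + r i j t ≤ U t) ∧
    -- and the extended label of l₁ dominates the extended label of l₂
    (c₁ + carc i j ≤ c₂ + carc i j ∧ insert j S₁ ⊆ insert j S₂ ∧
      ∀ t, R₁ t + r i j t ≤ R₂ t + r i j t) :=
  stmt1_general carc r U i j c₁ c₂ S₁ S₂ R₁ R₂ hc hS hR hj₂ hU₂
end

section
/- Join correctness for bidirectional dynamic programming: given a forward label l^f = (i, c^f, S^f, R^f) for a partial path from s to i and a backward label l^b = (j, c^b, S^b, R^b) for a partial path from j to d, if (i,j) ∈ A, S^f ∩ S^b = ∅, and R^f + r_{ij} + R^b ≤ U componentwise, then the concatenated walk from s to d is an elementary path of cost c^f + c_{ij} + c^b that satisfies all resource constraints. -/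
/-- Cost of a walk given as a list of visited nodes. -/
def walkCost {V : Type} (c : V → V → ℝ) (p : List V) : ℝ :=
  ((p.zip p.tail).map fun q => c q.1 q.2).sum

/-- Consumption of resource `t` along a walk. -/
def walkRes {V : Type} {k : ℕ} (r : V → V → Fin k → ℝ) (p : List V) (t : Fin k) : ℝ :=
  ((p.zip p.tail).map fun q => r q.1 q.2 t).sum

/-- A walk from `s` to `d`. -/
def IsWalk {V : Type} (A : V → V → Prop) (s d : V) (p : List V) : Prop :=
  p.Chain' A ∧ p.head? = some s ∧ p.getLast? = some d

section

variable {V : Type}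

theorem walkRes_eq_walkCost {k : ℕ} (r : V → V → Fin k → ℝ) (p : List V) (t : Fin k) :
    walkRes r p t = walkCost (fun u v => r u v t) p :=
  rfl

theorem walkCost_append (c : V → V → ℝ) {i j : V} :
    ∀ {p q : List V}, p.getLast? = some i → q.head? = some j →
      walkCost c (p ++ q) = walkCost c p + c i j + walkCost c q
  | [], _, hp, _ => by simp at hp
  | [a], b :: q, hp, hq => by
      simp only [List.getLast?_singleton, List.head?_cons, Option.some.injEq] at hp hq
      subst hp hq
      simp [walkCost]
  | a :: b :: p, q, hp, hq => by
      have ih := walkCost_append c (p := b :: p) (by simpa using hp) hq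
      simp only [walkCost, List.cons_append, List.tail_cons, List.zip_cons_cons, List.map_cons,
        List.sum_cons] at ih ⊢
      rw [ih]
      ring

theorem IsWalk.ne_nil {A : V → V → Prop} {s d : V} {p : List V} (hp : IsWalk A s d p) :
    p ≠ [] := by
  rintro rfl
  simp [IsWalk] at hp

theorem IsWalk.append {A : V → V → Prop} {s i j d : V} {p q : List V}
    (hp : IsWalk A s i p) (hq : IsWalk A j d q) (hij : A i j) : IsWalk A s d (p ++ q) := by
  refine ⟨List.isChain_append.2 ⟨hp.1, hq.1, ?_⟩, ?_, ?_⟩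
  · intro x hx y hy
    rw [hp.2.2, Option.mem_some_iff] at hx
    rw [hq.2.1, Option.mem_some_iff] at hy
    exact hx ▸ hy ▸ hij
  · rw [List.head?_append_of_ne_nil _ hp.ne_nil, hp.2.1]
  · rw [List.getLast?_append_of_ne_nil _ hq.ne_nil, hq.2.2]

theorem List.nodup_append_of_toFinset_inter_eq_empty [DecidableEq V] {p q : List V}
    (hp : p.Nodup) (hq : q.Nodup) (hpq : p.toFinset ∩ q.toFinset = ∅) : (p ++ q).Nodup :=
  List.nodup_append'.2
    ⟨hp, hq, List.disjoint_toFinset_iff_disjoint.1 (Finset.disjoint_iff_inter_eq_empty.2 hpq)⟩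

end

theorem stmt3_general {V : Type} [DecidableEq V] {k : ℕ}
    (A : V → V → Prop) (c : V → V → ℝ) (r : V → V → Fin k → ℝ) (U : Fin k → ℝ)
    (s d i j : V) (pf pb : List V) (cf cb : ℝ)
    (Sf Sb : Finset V) (Rf Rb : Fin k → ℝ)
    -- the forward label encodes pf
    (hpf : IsWalk A s i pf) (hpfel : pf.Nodup) (hSf : pf.toFinset = Sf)
    (hcf : walkCost c pf = cf) (hRf : ∀ t, walkRes r pf t = Rf t)
    -- the backward label encodes pb
    (hpb : IsWalk A j d pb) (hpbel : pb.Nodup) (hSb : pb.toFinset = Sb)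
    (hcb : walkCost c pb = cb) (hRb : ∀ t, walkRes r pb t = Rb t)
    -- join conditions
    (harc : A i j) (hdisj : Sf ∩ Sb = ∅)
    (hres : ∀ t, Rf t + r i j t + Rb t ≤ U t) :
    IsWalk A s d (pf ++ pb) ∧ (pf ++ pb).Nodup ∧
      walkCost c (pf ++ pb) = cf + c i j + cb ∧
      ∀ t, walkRes r (pf ++ pb) t ≤ U t := by
  subst hSf hSb
  have hjoin {f : V → V → ℝ} := walkCost_append f hpf.2.2 hpb.2.1
  refine ⟨hpf.append hpb harc, List.nodup_append_of_toFinset_inter_eq_empty hpfel hpbel hdisj,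
    by rw [hjoin, hcf, hcb], fun t => ?_⟩
  rw [walkRes_eq_walkCost, hjoin, ← walkRes_eq_walkCost, ← walkRes_eq_walkCost, hRf, hRb]
  exact hres t

/-- Join correctness for bidirectional dynamic programming: joining a forward
label (elementary path `pf` from `s` to `i` visiting exactly `Sf` with resource
consumption `Rf`) with a backward label (elementary path `pb` from `j` to `d`
visiting exactly `Sb` with consumption `Rb`) across an arc `(i,j)`, when the
visited sets are disjoint and `Rf + r_{ij} + Rb ≤ U`, yields an elementary
`s`-`d` path of cost `cf + c_{ij} + cb` satisfying all resource constraints. -/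
theorem stmt3 {V : Type} [DecidableEq V] {k : ℕ}
    (A : V → V → Prop) (c : V → V → ℝ) (r : V → V → Fin k → ℝ) (U : Fin k → ℝ)
    (hr : ∀ u v t, 0 ≤ r u v t)
    (s d i j : V) (pf pb : List V) (cf cb : ℝ)
    (Sf Sb : Finset V) (Rf Rb : Fin k → ℝ)
    -- the forward label encodes pf
    (hpf : IsWalk A s i pf) (hpfel : pf.Nodup) (hSf : pf.toFinset = Sf)
    (hcf : walkCost c pf = cf) (hRf : ∀ t, walkRes r pf t = Rf t)
    -- the backward label encodes pb
    (hpb : IsWalk A j d pb) (hpbel : pb.Nodup) (hSb : pb.toFinset = Sb)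
    (hcb : walkCost c pb = cb) (hRb : ∀ t, walkRes r pb t = Rb t)
    -- join conditions
    (harc : A i j) (hdisj : Sf ∩ Sb = ∅)
    (hres : ∀ t, Rf t + r i j t + Rb t ≤ U t) :
    IsWalk A s d (pf ++ pb) ∧ (pf ++ pb).Nodup ∧
      walkCost c (pf ++ pb) = cf + c i j + cb ∧
      ∀ t, walkRes r (pf ++ pb) t ≤ U t :=
  stmt3_general A c r U s d i j pf pb cf cb Sf Sb Rf Rb hpf hpfel hSf hcf hRf hpb hpbel hSb hcb hRb
    harc hdisj hres
end

section
/- DSSR termination: in decremental state space relaxation on a finite graph, if at each iteration in which the relaxed optimal solution contains a cycle at least one new node (repeated in that solution) is added to the critical set S, then after at most |N| iterations the algorithm terminates with an optimal elementary path (or proves infeasibility). -/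
/-- A walk is `S`-feasible if no node of `S` is repeated in it. -/
def SFeasible {V : Type} [DecidableEq V] (S : Finset V) (p : List V) : Prop :=
  ∀ v ∈ S, p.count v ≤ 1

/-- DSSR termination: given an iteration producing, for each `n`, a critical set
`S n` and a walk `sol n` optimal for the `S n`-relaxed problem (over
resource-feasible walks, feasibility `F`), where whenever `sol n` is not
elementary all its repeated nodes are added to the critical set, the algorithm
reaches, within at most `|N|` iterations, an elementary solution which is a
minimum-cost resource-feasible elementary `s`-`d` path. -/
theorem stmt8 {V : Type} [Fintype V] [DecidableEq V]
    (A : V → V → Prop) (c : V → V → ℝ) (s d : V) (F : List V → Prop)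
    (S : ℕ → Finset V) (sol : ℕ → List V)
    -- each sol n is a feasible solution of the S n-relaxed problem …
    (hfeas : ∀ n, IsWalk A s d (sol n) ∧ SFeasible (S n) (sol n) ∧ F (sol n))
    -- … and is optimal for it
    (hopt : ∀ n, ∀ q, IsWalk A s d q → SFeasible (S n) q → F q →
        walkCost c (sol n) ≤ walkCost c q)
    -- iteration rule: add all repeated nodes of the current solution
    (hstep : ∀ n, ¬ (sol n).Nodup →
        S (n + 1) = S n ∪ (sol n).toFinset.filter (fun v => 1 < (sol n).count v)) :
    ∃ n ≤ Fintype.card V, (sol n).Nodup ∧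
      ∀ q, IsWalk A s d q → q.Nodup → F q → walkCost c (sol n) ≤ walkCost c q := by
  by_cases h : ∃ n ≤ Fintype.card V, (sol n).Nodup
  · obtain ⟨n, hn, hnd⟩ := h
    exact ⟨n, hn, hnd, fun q hq hq' hF =>
      hopt n q hq (fun v _ => List.nodup_iff_count_le_one.mp hq' v) hF⟩
  · exfalso
    push_neg at h
    -- S is strictly increasing in card while solutions are non-elementary
    have hlt : ∀ n ≤ Fintype.card V, n ≤ (S n).card := by
      intro n hn
      induction n with
      | zero => exact Nat.zero_le _
      | succ k ih =>
        have hk : k ≤ Fintype.card V := Nat.le_of_succ_le hn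
        have hknd : ¬ (sol k).Nodup := by
          have := h k hk
          simpa using this
        obtain ⟨v, hv⟩ : ∃ v, 1 < (sol k).count v := by
          by_contra hc
          push_neg at hc
          exact hknd (List.nodup_iff_count_le_one.mpr fun v => hc v)
        have hvmem : v ∈ (sol k).toFinset.filter (fun v => 1 < (sol k).count v) := by
          simp only [Finset.mem_filter, List.mem_toFinset]
          exact ⟨List.count_pos_iff.mp (by omega), hv⟩
        have hvnot : v ∉ S k := by
          intro hvS
          have := (hfeas k).2.1 v hvS
          omega
        have hss : S k ⊂ S (k + 1) := by
          rw [hstep k hknd]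
          constructor
          · exact Finset.subset_union_left
          · intro hsub
            exact hvnot (hsub (Finset.mem_union_right _ hvmem))
        have := Finset.card_lt_card hss
        have := ih hk
        omega
    have hN := hlt (Fintype.card V) le_rfl
    have hcard : (S (Fintype.card V)).card = Fintype.card V :=
      le_antisymm (Finset.card_le_univ _) hN
    have huniv : S (Fintype.card V) = Finset.univ := Finset.eq_univ_of_card _ hcard
    have : (sol (Fintype.card V)).Nodup := by
      apply List.nodup_iff_count_le_one.mpr
      intro v
      exact (hfeas (Fintype.card V)).2.1 v (huniv ▸ Finset.mem_univ v)
    exact h (Fintype.card V) le_rfl this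
end

section
/- Hybrid NG-DSSRC correctness: running the ng-path relaxation first and, if its optimal solution is non-elementary, switching to DSSR-style iterations that enforce elementarity on an increasing set of nodes, terminates in finitely many iterations with an optimal elementary solution, and every intermediate optimal value is a valid lower bound on the elementary optimum. -/
/-- Hybrid NG-DSSRC correctness, modelled abstractly: a family of relaxations
indexed by a finite lattice `P` with top element; `Feas p` is the feasible set
of relaxation `p`, antitone in `p`, with `Feas ⊤` equal to the set of
elementary solutions. An iterative scheme whose optimum at a non-elementary
step strictly increases the parameter terminates within at most `|P|`
iterations with an optimal elementary solution, and all intermediate optima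
are valid lower bounds on the elementary optimum. -/
theorem stmt16 {P : Type} [Fintype P] [Lattice P] [OrderTop P]
    {X : Type} (cost : X → ℝ) (Elem : X → Prop)
    (Feas : P → Set X)
    (hmono : ∀ p q : P, p ≤ q → Feas q ⊆ Feas p)
    (htop : Feas ⊤ = {x | Elem x})
    (p : ℕ → P) (sol : ℕ → X)
    (hsol : ∀ n, sol n ∈ Feas (p n))
    (hopt : ∀ n, ∀ y ∈ Feas (p n), cost (sol n) ≤ cost y)
    (hstep : ∀ n, ¬ Elem (sol n) → p n < p (n + 1)) :
    -- termination within at most |P| iterations, with an optimal elementary solution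
    (∃ n ≤ Fintype.card P, Elem (sol n) ∧ ∀ y, Elem y → cost (sol n) ≤ cost y) ∧
    -- lower-bound validity throughout
    (∀ n, ∀ y, Elem y → cost (sol n) ≤ cost y) := by
  have hlb : ∀ n, ∀ y, Elem y → cost (sol n) ≤ cost y := by
    intro n y hy
    exact hopt n y (hmono (p n) ⊤ le_top (htop ▸ hy))
  refine ⟨?_, hlb⟩
  by_contra h
  push_neg at h
  have hne : ∀ n ≤ Fintype.card P, ¬ Elem (sol n) := by
    intro n hn he
    obtain ⟨y, hy, hlt⟩ := h n hn he
    exact absurd (hlb n y hy) (not_le.mpr hlt)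
  have hmonop : ∀ m n, m ≤ n → n ≤ Fintype.card P → p m ≤ p n := by
    intro m n hmn hn
    induction n with
    | zero => simp_all
    | succ k ih =>
      rcases Nat.lt_or_ge m (k+1) with hlt | hge
      · exact le_trans (ih (by omega) (by omega))
          (le_of_lt (hstep k (hne k (by omega))))
      · have : m = k + 1 := by omega
        simp [this]
  have hstrict : ∀ m n, m < n → n ≤ Fintype.card P → p m < p n := by
    intro m n hmn hn
    exact lt_of_lt_of_le (hstep m (hne m (by omega)))
      (hmonop (m+1) n (by omega) hn)
  have hinj : Function.Injective (fun i : Fin (Fintype.card P + 1) => p i) := by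
    intro a b hab
    by_contra hne'
    rcases Ne.lt_or_gt hne' with hl | hl
    · exact absurd hab (ne_of_lt (hstrict a b hl (by omega)))
    · exact absurd hab.symm (ne_of_lt (hstrict b a hl (by omega)))
  have := Fintype.card_le_of_injective _ hinj
  simp at this
end

section
/- Pareto frontier sufficiency: at each node, keeping only the Pareto-optimal labels under the partial order (cost, resource vector, visited set) — componentwise ≤ and ⊆ — suffices: for every feasible elementary s-d path there is a feasible elementary s-d path of no greater cost all of whose prefixes correspond to Pareto-optimal labels. -/
/-- A label: a feasible elementary partial path from `s` (nonempty walk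
starting at `s`, no repeated nodes, resource-feasible). -/
def IsLabel {V : Type} [DecidableEq V] {k : ℕ} (A : V → V → Prop) (s : V)
    (r : V → V → Fin k → ℝ) (U : Fin k → ℝ) (q : List V) : Prop :=
  q ≠ [] ∧ q.Chain' A ∧ q.head? = some s ∧ q.Nodup ∧ ∀ t, walkRes r q t ≤ U t

/-- The partial order `⪯` on labels at the same node: componentwise comparison
of (cost, visited set, resource vector). -/
def LabelLE {V : Type} [DecidableEq V] {k : ℕ} (c : V → V → ℝ)
    (r : V → V → Fin k → ℝ) (q₁ q₂ : List V) : Prop :=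
  q₁.getLast? = q₂.getLast? ∧ walkCost c q₁ ≤ walkCost c q₂ ∧
    q₁.toFinset ⊆ q₂.toFinset ∧ ∀ t, walkRes r q₁ t ≤ walkRes r q₂ t

/-- A label is Pareto-optimal if no label at the same node strictly dominates
it (i.e. `⪯`-below it but not equal in the order-relevant components). -/
def ParetoOptimal {V : Type} [DecidableEq V] {k : ℕ} (A : V → V → Prop) (s : V)
    (c : V → V → ℝ) (r : V → V → Fin k → ℝ) (U : Fin k → ℝ) (q : List V) : Prop :=
  ¬ ∃ q', IsLabel A s r U q' ∧ LabelLE c r q' q ∧ ¬ LabelLE c r q q'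

/-! Among the feasible elementary `s`-`d` paths of cost at most that of `p` (a finite set, since
elementary paths have at most `|V|` nodes) pick one, `p'`, whose key (cost, visited set, resource
vector) is minimal in the product order. If a prefix `q` of `p'` were strictly dominated by a
label `q'`, splicing `q'` in place of `q` would give another such path whose key is no larger,
because extension is monotone. Minimality forces the reverse inequality of keys, and since the
suffix of an elementary path is disjoint from `q`, it restricts to `q ⪯ q'`: a contradiction. -/

section Walks

variable {V : Type} {k : ℕ}

lemma List.zip_tail_append_of_getLast? {l₁ : List V} {a : V} (h : l₁.getLast? = some a)
    (l₂ : List V) :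
    (l₁ ++ l₂).zip (l₁ ++ l₂).tail = l₁.zip l₁.tail ++ (a :: l₂).zip l₂ := by
  induction l₁ with
  | nil => simp at h
  | cons x l ih =>
    cases l with
    | nil => simp_all
    | cons y l => simpa using ih (by simpa using h)

lemma walkCost_append_s18 {l₁ : List V} {a : V} (h : l₁.getLast? = some a) (c : V → V → ℝ)
    (l₂ : List V) : walkCost c (l₁ ++ l₂) = walkCost c l₁ + walkCost c (a :: l₂) := by
  simp only [walkCost, List.zip_tail_append_of_getLast? h, List.map_append, List.sum_append]
  rfl

lemma walkRes_append {l₁ : List V} {a : V} (h : l₁.getLast? = some a)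
    (r : V → V → Fin k → ℝ) (l₂ : List V) :
    walkRes r (l₁ ++ l₂) = walkRes r l₁ + walkRes r (a :: l₂) :=
  funext fun t => walkCost_append_s18 h (fun u v => r u v t) l₂

end Walks

section Labels

variable {V : Type} [DecidableEq V] {k : ℕ} (c : V → V → ℝ) (r : V → V → Fin k → ℝ)

def labelKey (q : List V) : ℝ × Finset V × (Fin k → ℝ) :=
  (walkCost c q, q.toFinset, walkRes r q)

lemma labelLE_iff {q₁ q₂ : List V} :
    LabelLE c r q₁ q₂ ↔ q₁.getLast? = q₂.getLast? ∧ labelKey c r q₁ ≤ labelKey c r q₂ := by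
  simp only [LabelLE, labelKey, Prod.mk_le_mk, Pi.le_def]

variable {c r}

lemma labelKey_append_le_append {q q' : List V} {a : V} (hq : q.getLast? = some a)
    (hq' : q'.getLast? = some a) (hle : labelKey c r q' ≤ labelKey c r q) (rest : List V) :
    labelKey c r (q' ++ rest) ≤ labelKey c r (q ++ rest) := by
  obtain ⟨hcost, hset, hres⟩ := hle
  simp only [labelKey, Prod.mk_le_mk] at hcost hset hres ⊢
  simp only [walkCost_append_s18 hq, walkCost_append_s18 hq', walkRes_append hq, walkRes_append hq',
    List.toFinset_append]
  exact ⟨add_le_add_left hcost _, Finset.union_subset_union hset subset_rfl,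
    add_le_add_left hres _⟩

lemma labelKey_le_of_append_le_append {q q' rest : List V} {a : V} (hq : q.getLast? = some a)
    (hq' : q'.getLast? = some a) (hdisj : ∀ x ∈ q, x ∉ rest)
    (hle : labelKey c r (q ++ rest) ≤ labelKey c r (q' ++ rest)) :
    labelKey c r q ≤ labelKey c r q' := by
  obtain ⟨hcost, hset, hres⟩ := hle
  simp only [labelKey, walkCost_append_s18 hq, walkCost_append_s18 hq', walkRes_append hq,
    walkRes_append hq', List.toFinset_append] at hcost hset hres
  refine ⟨le_of_add_le_add_right hcost, fun x hx => ?_, le_of_add_le_add_right hres⟩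
  have hxq : x ∈ q := List.mem_toFinset.mp hx
  simpa [labelKey, hdisj x hxq] using hset (Finset.mem_union_left _ hx)

variable {A : V → V → Prop} {s : V} {U : Fin k → ℝ}

lemma IsLabel.append_of_dominates {q q' rest : List V} {a : V} (hq'lab : IsLabel A s r U q')
    (hlab : IsLabel A s r U (q ++ rest)) (hq : q.getLast? = some a)
    (hq' : q'.getLast? = some a) (hle : labelKey c r q' ≤ labelKey c r q) :
    IsLabel A s r U (q' ++ rest) := by
  obtain ⟨hne', hchain', hhead', hnodup', _⟩ := hq'lab
  obtain ⟨-, hchain, -, hnodup, hres⟩ := hlab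
  obtain ⟨-, hchainRest, hlink⟩ := List.isChain_append.mp hchain
  obtain ⟨-, hnodupRest, hdisj⟩ := List.nodup_append.mp hnodup
  have hsub : ∀ x ∈ q', x ∈ q := fun x hx => by
    simpa [labelKey] using hle.2.1 (List.mem_toFinset.mpr hx)
  refine ⟨by simp [hne'], List.isChain_append.mpr ⟨hchain', hchainRest, ?_⟩, ?_,
    List.nodup_append.mpr ⟨hnodup', hnodupRest, fun x hx => hdisj x (hsub x hx)⟩, fun t => ?_⟩
  · intro x hx
    exact hlink x (by rwa [hq, ← hq'])
  · obtain ⟨x, xs, rfl⟩ := List.exists_cons_of_ne_nil hne'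
    simpa using hhead'
  · exact le_trans ((labelKey_append_le_append hq hq' hle rest).2.2 t) (hres t)

end Labels

theorem stmt18_general {V : Type} [Fintype V] [DecidableEq V] {k : ℕ}
    (A : V → V → Prop) (c : V → V → ℝ) (r : V → V → Fin k → ℝ) (U : Fin k → ℝ)
    (s d : V) :
    ∀ p, IsLabel A s r U p → p.getLast? = some d →
      ∃ p', IsLabel A s r U p' ∧ p'.getLast? = some d ∧
        walkCost c p' ≤ walkCost c p ∧
        ∀ q, q ≠ [] → q <+: p' → ParetoOptimal A s c r U q := by
  intro p hp hpd
  set S : Set (List V) :=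
    {x | IsLabel A s r U x ∧ x.getLast? = some d ∧ walkCost c x ≤ walkCost c p}
  have hSfin : S.Finite := (List.finite_length_le V (Fintype.card V)).subset
    fun x hx => hx.1.2.2.2.1.length_le_card
  obtain ⟨p', ⟨hp'lab, hp'd, hp'cost⟩, hmin⟩ :=
    hSfin.exists_minimalFor (labelKey c r) S ⟨p, hp, hpd, le_rfl⟩
  refine ⟨p', hp'lab, hp'd, hp'cost, ?_⟩
  rintro q hq ⟨rest, rfl⟩ ⟨q', hq'lab, hle, hnot⟩
  rw [labelLE_iff] at hle hnot
  obtain ⟨a, ha⟩ := Option.ne_none_iff_exists'.mp (mt List.getLast?_eq_none_iff.mp hq)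
  have hq'a : q'.getLast? = some a := hle.1.trans ha
  have hext := labelKey_append_le_append ha hq'a hle.2 rest
  have hlast : (q' ++ rest).getLast? = some d := by
    rw [List.getLast?_append] at hp'd ⊢
    rwa [hq'a, ← ha]
  have hmem : q' ++ rest ∈ S :=
    ⟨hq'lab.append_of_dominates hp'lab ha hq'a hle.2, hlast, hext.1.trans hp'cost⟩
  have hdisj := (List.nodup_append.mp hp'lab.2.2.2.1).2.2
  exact hnot ⟨hle.1.symm, labelKey_le_of_append_le_append ha hq'a
    (fun x hx hxr => hdisj x hx x hxr rfl) (hmin hmem hext)⟩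

/-- Pareto frontier sufficiency: for every feasible elementary `s`-`d` path
there is a feasible elementary `s`-`d` path of no greater cost all of whose
(nonempty) prefixes are Pareto-optimal labels. -/
theorem stmt18 {V : Type} [Fintype V] [DecidableEq V] {k : ℕ}
    (A : V → V → Prop) (c : V → V → ℝ) (r : V → V → Fin k → ℝ) (U : Fin k → ℝ)
    (hr : ∀ u v t, 0 ≤ r u v t) (s d : V) :
    ∀ p, IsLabel A s r U p → p.getLast? = some d →
      ∃ p', IsLabel A s r U p' ∧ p'.getLast? = some d ∧
        walkCost c p' ≤ walkCost c p ∧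
        ∀ q, q ≠ [] → q <+: p' → ParetoOptimal A s c r U q :=
  stmt18_general A c r U s d
end
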